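/- Cardinality of the typical set: let d, n ≥ 1, let P : Fin d → ℝ be a probability distribution (entries nonnegative, summing to 1), and let δ ≥ 0. Then the number of strings x : Fin n → Fin d whose empirical distribution satisfies ∑ i, |(t(x) i : ℝ)/n − P i| ≤ δ is at most (n+1)^d · Real.exp(n·(H(P) + η(δ) + δ·log d)). -/

import Mathlib

/-- The type of a string `x : Fin n → Fin d`: the number of occurrences of each symbol. -/
def typeCount {d n : ℕ} (x : Fin n → Fin d) (i : Fin d) : ℕ :=
  (Finset.univ.filter fun j => x j = i).card

/-- The function `η` from Fannes' inequality: `η ε = -ε log ε` for `ε ≤ 1/e` and `1/e` otherwise. -/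
noncomputable def eta (ε : ℝ) : ℝ :=
  if ε ≤ 1 / Real.exp 1 then -ε * Real.log ε else 1 / Real.exp 1

open Finset

lemma log_ge_one_sub_inv {x : ℝ} (hx : 0 < x) : 1 - x⁻¹ ≤ Real.log x := by
  have h := Real.log_le_sub_one_of_pos (x := x⁻¹) (by positivity)
  rw [Real.log_inv] at h; linarith

lemma negMulLog_le_inv_e {x : ℝ} (hx : 0 ≤ x) : Real.negMulLog x ≤ 1 / Real.exp 1 := by
  rcases eq_or_lt_of_le hx with h | h
  · simp [← h]; positivity
  · have h1 : (0:ℝ) < Real.exp 1 * x := by positivity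
    have h2 := log_ge_one_sub_inv h1
    rw [Real.log_mul (by positivity) (ne_of_gt h), Real.log_exp] at h2
    have h4 : -(Real.exp 1 * x)⁻¹ ≤ Real.log x := by linarith
    have h5 : x * (-(Real.exp 1 * x)⁻¹) ≤ x * Real.log x :=
      mul_le_mul_of_nonneg_left h4 hx
    have h6 : x * (Real.exp 1 * x)⁻¹ = 1 / Real.exp 1 := by
      field_simp
    rw [Real.negMulLog]
    nlinarith
 
lemma one_div_e_le_one : 1 / Real.exp 1 ≤ 1 := by
  have := Real.add_one_le_exp 1
  rw [div_le_one (by positivity)]; linarith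

lemma eta_nonneg {δ : ℝ} (hδ : 0 ≤ δ) : 0 ≤ eta δ := by
  unfold eta; split_ifs with h
  · have h1 : δ ≤ 1 := le_trans h one_div_e_le_one
    have := Real.negMulLog_nonneg hδ h1
    simpa [Real.negMulLog] using this
  · positivity

lemma negMulLog_le_eta {ε δ : ℝ} (hε : 0 ≤ ε) (h : ε ≤ δ) : Real.negMulLog ε ≤ eta δ := by
  unfold eta; split_ifs with hcase
  · rcases eq_or_lt_of_le hε with h0 | h0
    · rw [← h0]; simp
      have h1 : δ ≤ 1 := le_trans hcase one_div_e_le_one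
      have := Real.negMulLog_nonneg (le_trans hε h) h1
      simpa [Real.negMulLog] using this
    · have hδpos : 0 < δ := lt_of_lt_of_le h0 h
      have l1 : Real.log (δ/ε) ≤ δ/ε - 1 := Real.log_le_sub_one_of_pos (by positivity)
      have l1' : ε * Real.log (δ/ε) ≤ δ - ε := by
        have := mul_le_mul_of_nonneg_left l1 hε
        rw [mul_sub, mul_one, mul_div_cancel₀ _ (ne_of_gt h0)] at this
        linarith
      have l2 : Real.log δ ≤ -1 := by
        have := Real.log_le_log hδpos hcase
        rw [one_div, Real.log_inv, Real.log_exp] at this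
        linarith
      have l3 : Real.log (δ/ε) = Real.log δ - Real.log ε :=
        Real.log_div (ne_of_gt hδpos) (ne_of_gt h0)
      rw [Real.negMulLog]
      nlinarith [mul_le_mul_of_nonneg_right l2 (sub_nonneg.mpr h)]
  · exact negMulLog_le_inv_e hε

/-- `η(1-ε) ≤ η(ε)` for `ε ∈ [0, 1/2]`. -/
lemma negMulLog_one_sub_le {ε : ℝ} (hε : 0 ≤ ε) (h : ε ≤ 1/2) :
    Real.negMulLog (1 - ε) ≤ Real.negMulLog ε := by
  rcases eq_or_lt_of_le hε with h0 | h0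
  · rw [← h0]; simp
  rcases le_total ε (1/3) with hc | hc
  · -- ε ≤ 1/3
    have hl : Real.log (1 - ε)⁻¹ ≤ (1 - ε)⁻¹ - 1 :=
      Real.log_le_sub_one_of_pos (by rw [inv_pos]; linarith)
    rw [Real.log_inv] at hl
    have hL : Real.negMulLog (1 - ε) ≤ ε := by
      rw [Real.negMulLog]
      have h1 : (1 - ε) * (-Real.log (1 - ε)) ≤ (1 - ε) * ((1 - ε)⁻¹ - 1) := by
        apply mul_le_mul_of_nonneg_left (by linarith) (by linarith)
      have h2 : (1 - ε) * ((1 - ε)⁻¹ - 1) = ε := by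
        rw [mul_sub, mul_inv_cancel₀ (by linarith : (1:ℝ)-ε ≠ 0)]; ring
      nlinarith
    have hlog3 : (1:ℝ) ≤ Real.log 3 := by
      have h3 : Real.exp 1 ≤ 3 := by
        have := Real.exp_one_lt_d9
        linarith
      calc (1:ℝ) = Real.log (Real.exp 1) := (Real.log_exp 1).symm
        _ ≤ Real.log 3 := Real.log_le_log (Real.exp_pos 1) h3
    have hR : ε ≤ Real.negMulLog ε := by
      rw [Real.negMulLog]
      have h4 : Real.log 3 ≤ Real.log ε⁻¹ := by
        apply Real.log_le_log (by norm_num)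
        rw [le_inv_comm₀ (by norm_num) h0]
        linarith
      rw [Real.log_inv] at h4
      nlinarith
    linarith
  · -- 1/3 ≤ ε ≤ 1/2
    have he1 : (0:ℝ) < 2 * (1 - ε) := by linarith
    have he2 : (0:ℝ) < 2 * ε := by linarith
    have h1 : 1 - (2 * (1 - ε))⁻¹ ≤ Real.log (2 * (1 - ε)) := log_ge_one_sub_inv he1
    have h2 : Real.log (2 * ε) ≤ 2 * ε - 1 := Real.log_le_sub_one_of_pos he2
    rw [Real.log_mul (by norm_num) (by linarith)] at h1
    rw [Real.log_mul (by norm_num) (by linarith)] at h2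
    have hlog2 : Real.log 2 < 0.6931471808 := Real.log_two_lt_d9
    have hlog2' : (0:ℝ) < Real.log 2 := Real.log_pos (by norm_num)
    have hinv : (2 * (1 - ε))⁻¹ ≤ 1 := by
      rw [inv_le_one_iff₀]; right; linarith
    -- LHS ≤ (1-ε)(log2-1) + 1/2 ; RHS ≥ ε(log2+1-2ε)
    have hL : Real.negMulLog (1 - ε) ≤ (1 - ε) * (Real.log 2 - 1) + (1 - ε) * (2 * (1-ε))⁻¹ := by
      rw [Real.negMulLog]
      nlinarith
    have hinv2 : (1 - ε) * (2 * (1 - ε))⁻¹ = 1/2 := by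
      rw [mul_inv, ← mul_assoc, mul_comm (1-ε), mul_assoc, mul_inv_cancel₀ (by linarith : (1:ℝ)-ε ≠ 0)]
      norm_num
    have hR : ε * (Real.log 2 + 1 - 2*ε) ≤ Real.negMulLog ε := by
      rw [Real.negMulLog]
      nlinarith
    nlinarith

/-- increasing case: `η(p+ε) ≤ η(p) + η(ε)` for nonneg reals. -/
lemma negMulLog_add_le {p ε : ℝ} (hp : 0 ≤ p) (hε : 0 ≤ ε) :
    Real.negMulLog (p + ε) ≤ Real.negMulLog p + Real.negMulLog ε := by
  rcases eq_or_lt_of_le hp with h0 | h0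
  · rw [← h0]; simp
  rcases eq_or_lt_of_le hε with h1 | h1
  · rw [← h1]; simp
  have l1 : Real.log p ≤ Real.log (p + ε) := Real.log_le_log h0 (by linarith)
  have l2 : Real.log ε ≤ Real.log (p + ε) := Real.log_le_log h1 (by linarith)
  simp only [Real.negMulLog]
  nlinarith

/-- decreasing case via concavity four-point trick:
`η(q) ≤ η(q+ε) + η(1-ε)` when `0 ≤ q`, `q + ε ≤ 1`, `0 ≤ ε`. -/
lemma negMulLog_four_point {q ε : ℝ} (hq : 0 ≤ q) (hε : 0 ≤ ε) (h1 : q + ε ≤ 1) :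
    Real.negMulLog q ≤ Real.negMulLog (q + ε) + Real.negMulLog (1 - ε) := by
  rcases eq_or_lt_of_le hε with h0 | h0
  · rw [← h0]
    have : (0:ℝ) ≤ Real.negMulLog 1 := by simp
    simp only [add_zero]
    have := Real.negMulLog_nonneg (by norm_num : (0:ℝ) ≤ 1) le_rfl
    simp only [sub_zero]
    nlinarith [Real.negMulLog_one]
  have hq1 : q < 1 := by linarith
  set lam : ℝ := (1 - q - ε) / (1 - q) with hlam
  set mu : ℝ := ε / (1 - q) with hmu
  have h1q : (0:ℝ) < 1 - q := by linarith
  have hlam0 : 0 ≤ lam := div_nonneg (by linarith) (by linarith)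
  have hmu0 : 0 ≤ mu := div_nonneg (by linarith) (by linarith)
  have hsum : lam + mu = 1 := by
    rw [hlam, hmu, ← add_div, div_eq_one_iff_eq (ne_of_gt h1q)]; ring
  have hconc := Real.concaveOn_negMulLog
  have hA := hconc.2 (Set.mem_Ici.mpr hq) (Set.mem_Ici.mpr (by norm_num : (0:ℝ) ≤ 1))
    hlam0 hmu0 hsum
  have hB := hconc.2 (Set.mem_Ici.mpr hq) (Set.mem_Ici.mpr (by norm_num : (0:ℝ) ≤ 1))
    hmu0 hlam0 (by linarith)
  have e1 : lam * q + mu * 1 = q + ε := by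
    rw [hlam, hmu]; field_simp; ring
  have e2 : mu * q + lam * 1 = 1 - ε := by
    rw [hlam, hmu]; field_simp; ring
  simp only [smul_eq_mul] at hA hB
  rw [e1] at hA
  rw [e2] at hB
  rw [Real.negMulLog_one] at hA hB
  calc Real.negMulLog q = (lam + mu) * Real.negMulLog q := by rw [hsum]; ring
    _ = (lam * Real.negMulLog q + mu * 0) + (mu * Real.negMulLog q + lam * 0) := by ring
    _ ≤ Real.negMulLog (q + ε) + Real.negMulLog (1 - ε) := add_le_add hA hB

/-- Per-coordinate entropy continuity. -/
lemma negMulLog_sub_le {p q : ℝ} (hp : 0 ≤ p) (hp1 : p ≤ 1) (hq : 0 ≤ q) (hq1 : q ≤ 1)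
    (hpq : |q - p| ≤ 1/2) :
    Real.negMulLog q - Real.negMulLog p ≤ Real.negMulLog |q - p| := by
  rcases le_total p q with hle | hle
  · rw [abs_of_nonneg (by linarith)]
    have := negMulLog_add_le hp (by linarith : (0:ℝ) ≤ q - p)
    have e : p + (q - p) = q := by ring
    rw [e] at this; linarith
  · rw [abs_of_nonpos (by linarith), neg_sub]
    have h4 := negMulLog_four_point hq (by linarith : (0:ℝ) ≤ p - q) (by linarith)
    have e : q + (p - q) = p := by ring
    rw [e] at h4
    have h5 : Real.negMulLog (1 - (p - q)) ≤ Real.negMulLog (p - q) := by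
      apply negMulLog_one_sub_le (by linarith)
      rw [abs_of_nonpos (by linarith), neg_sub] at hpq; linarith
    linarith

/-- Jensen for negMulLog with uniform weights. -/
lemma sum_negMulLog_le {d : ℕ} (hd : 1 ≤ d) (f : Fin d → ℝ) (hf : ∀ i, 0 ≤ f i) :
    ∑ i, Real.negMulLog (f i) ≤ d * Real.negMulLog ((∑ i, f i) / d) := by
  have hd0 : (0:ℝ) < d := by exact_mod_cast hd
  have h := Real.concaveOn_negMulLog.le_map_sum (t := Finset.univ)
    (w := fun _ : Fin d => ((d:ℝ))⁻¹)
    (p := f) (fun i _ => by positivity)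
    (by simp [Finset.sum_const, Finset.card_univ, nsmul_eq_mul]
        field_simp)
    (fun i _ => Set.mem_Ici.mpr (hf i))
  simp only [smul_eq_mul] at h
  have e1 : ∑ i, ((d:ℝ))⁻¹ * f i = (∑ i, f i) / d := by
    rw [← Finset.mul_sum, div_eq_inv_mul]
  rw [e1] at h
  calc ∑ i, Real.negMulLog (f i) = d * ∑ i, ((d:ℝ))⁻¹ * Real.negMulLog (f i) := by
        rw [← Finset.mul_sum, ← mul_assoc, mul_inv_cancel₀ (ne_of_gt hd0), one_mul]
    _ ≤ d * Real.negMulLog ((∑ i, f i) / d) := by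
        apply mul_le_mul_of_nonneg_left h (le_of_lt hd0)

lemma single_le_one {d : ℕ} {P : Fin d → ℝ} (hP : ∀ i, 0 ≤ P i) (hP1 : ∑ i, P i = 1)
    (i : Fin d) : P i ≤ 1 := by
  rw [← hP1]
  exact Finset.single_le_sum (fun j _ => hP j) (Finset.mem_univ i)

lemma entropy_nonneg {d : ℕ} {P : Fin d → ℝ} (hP : ∀ i, 0 ≤ P i) (hP1 : ∑ i, P i = 1) :
    0 ≤ ∑ i, Real.negMulLog (P i) :=
  Finset.sum_nonneg fun i _ => Real.negMulLog_nonneg (hP i) (single_le_one hP hP1 i)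

lemma entropy_le_log {d : ℕ} (hd : 1 ≤ d) {Q : Fin d → ℝ} (hQ : ∀ i, 0 ≤ Q i)
    (hQ1 : ∑ i, Q i = 1) : ∑ i, Real.negMulLog (Q i) ≤ Real.log d := by
  have hd0 : (0:ℝ) < d := by exact_mod_cast hd
  have h := sum_negMulLog_le hd Q hQ
  rw [hQ1] at h
  have : Real.negMulLog (1 / d) = (1/d) * Real.log d := by
    rw [Real.negMulLog, one_div, Real.log_inv]; ring
  rw [this] at h
  calc ∑ i, Real.negMulLog (Q i) ≤ (d:ℝ) * ((1/d) * Real.log d) := h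
    _ = Real.log d := by field_simp

/-- Fannes-type one-sided continuity bound. -/
lemma fannes_upper {d : ℕ} (hd : 1 ≤ d) (P Q : Fin d → ℝ)
    (hP : ∀ i, 0 ≤ P i) (hP1 : ∑ i, P i = 1) (hQ : ∀ i, 0 ≤ Q i) (hQ1 : ∑ i, Q i = 1)
    {δ : ℝ} (hδ : 0 ≤ δ) (hPQ : ∑ i, |Q i - P i| ≤ δ) :
    ∑ i, Real.negMulLog (Q i) ≤ (∑ i, Real.negMulLog (P i)) + eta δ + δ * Real.log d := by
  have hd0 : (0:ℝ) < d := by exact_mod_cast hd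
  have hlogd : 0 ≤ Real.log d := Real.log_nonneg (by exact_mod_cast hd)
  by_cases hδ1 : 1 ≤ δ
  · have h1 := entropy_le_log hd hQ hQ1
    have h2 := entropy_nonneg hP hP1
    have h3 := eta_nonneg hδ
    nlinarith
  · push_neg at hδ1
    -- each coordinate deviation is at most δ/2 ≤ 1/2
    have hhalf : ∀ i, |Q i - P i| ≤ δ / 2 := by
      intro i
      have hsplit : ∑ j ∈ Finset.univ.erase i, (Q j - P j) = -(Q i - P i) := by
        rw [Finset.sum_erase_eq_sub (Finset.mem_univ i)]
        rw [Finset.sum_sub_distrib, hP1, hQ1]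
        ring
      have habs : |Q i - P i| ≤ ∑ j ∈ Finset.univ.erase i, |Q j - P j| := by
        calc |Q i - P i| = |∑ j ∈ Finset.univ.erase i, (Q j - P j)| := by
              rw [hsplit, abs_neg]
          _ ≤ ∑ j ∈ Finset.univ.erase i, |Q j - P j| :=
              Finset.abs_sum_le_sum_abs _ _
      have hsum : |Q i - P i| + ∑ j ∈ Finset.univ.erase i, |Q j - P j|
          = ∑ j, |Q j - P j| := by
        exact Finset.add_sum_erase _ (fun j => |Q j - P j|) (Finset.mem_univ i)
      linarith
    have hper : ∀ i, Real.negMulLog (Q i) - Real.negMulLog (P i)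
        ≤ Real.negMulLog (|Q i - P i|) := fun i =>
      negMulLog_sub_le (hP i) (single_le_one hP hP1 i) (hQ i) (single_le_one hQ hQ1 i)
        (le_trans (hhalf i) (by linarith))
    set s : ℝ := ∑ i, |Q i - P i| with hs
    have hs0 : 0 ≤ s := Finset.sum_nonneg fun i _ => abs_nonneg _
    have hstep : ∑ i, Real.negMulLog (Q i) - ∑ i, Real.negMulLog (P i)
        ≤ ∑ i, Real.negMulLog (|Q i - P i|) := by
      rw [← Finset.sum_sub_distrib]
      exact Finset.sum_le_sum fun i _ => hper i
    rcases eq_or_lt_of_le hs0 with hs0' | hs0'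
    · -- s = 0: all deviations zero
      have hz : ∀ i ∈ Finset.univ, |Q i - P i| = 0 := by
        intro i _
        have h := (Finset.sum_eq_zero_iff_of_nonneg
          (s := (Finset.univ : Finset (Fin d)))
          (f := fun j => |Q j - P j|) (fun j _ => abs_nonneg (Q j - P j))).mp hs0'.symm
        exact h i (Finset.mem_univ i)
      have : ∑ i, Real.negMulLog (|Q i - P i|) = 0 := by
        apply Finset.sum_eq_zero; intro i hi; rw [hz i hi]; simp
      have h3 := eta_nonneg hδ
      nlinarith
    · have hjensen := sum_negMulLog_le hd (fun i => |Q i - P i|) (fun i => abs_nonneg _)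
      rw [← hs] at hjensen
      have hcompute : (d:ℝ) * Real.negMulLog (s / d) = Real.negMulLog s + s * Real.log d := by
        rw [Real.negMulLog, Real.negMulLog,
          Real.log_div (ne_of_gt hs0') (ne_of_gt hd0)]
        field_simp; ring
      have h4 : Real.negMulLog s ≤ eta δ := negMulLog_le_eta hs0 hPQ
      have h5 : s * Real.log d ≤ δ * Real.log d :=
        mul_le_mul_of_nonneg_right hPQ hlogd
      linarith

lemma typeCount_le {d n : ℕ} (x : Fin n → Fin d) (i : Fin d) : typeCount x i ≤ n := by
  calc typeCount x i ≤ (Finset.univ : Finset (Fin n)).card := Finset.card_filter_le _ _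
    _ = n := Finset.card_univ.trans (Fintype.card_fin n)

lemma typeCount_sum {d n : ℕ} (x : Fin n → Fin d) : ∑ i, typeCount x i = n := by
  classical
  have := Finset.card_eq_sum_card_fiberwise
    (f := x) (s := Finset.univ) (t := Finset.univ) (fun j _ => Finset.mem_univ (x j))
  simpa [typeCount, Finset.card_univ] using this.symm

lemma prod_eq_pow_typeCount {d n : ℕ} (x : Fin n → Fin d) (Q : Fin d → ℝ) :
    ∏ j, Q (x j) = ∏ i, Q i ^ (typeCount x i) := by
  classical
  rw [← Finset.prod_fiberwise Finset.univ x (fun j => Q (x j))]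
  apply Finset.prod_congr rfl
  intro i _
  have hcg : ∀ j ∈ Finset.univ.filter (x · = i), Q (x j) = Q i := fun j hj => by
    rw [(Finset.mem_filter.mp hj).2]
  rw [Finset.prod_congr rfl hcg, Finset.prod_const]
  rfl

/-- Size of a type class: at most `exp(n H(empirical))`. -/
lemma typeclass_card_le {d n : ℕ} (hn : 1 ≤ n) (x₀ : Fin n → Fin d) :
    (((Finset.univ.filter fun x : Fin n → Fin d => typeCount x = typeCount x₀).card : ℝ)) ≤
      Real.exp ((n:ℝ) * ∑ i, Real.negMulLog ((typeCount x₀ i : ℝ) / n)) := by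
  classical
  have hn0 : (0:ℝ) < n := by exact_mod_cast hn
  set t : Fin d → ℕ := typeCount x₀ with ht
  set Q : Fin d → ℝ := fun i => (t i : ℝ) / n with hQ
  have hQ0 : ∀ i, 0 ≤ Q i := fun i => by positivity
  have hQ1 : ∑ i, Q i = 1 := by
    rw [hQ, ← Finset.sum_div]
    rw [show ∑ i, ((t i : ℝ)) = (n:ℝ) by exact_mod_cast congrArg Nat.cast (typeCount_sum x₀)]
    field_simp
  set c : ℝ := ∏ i, Q i ^ (t i) with hc
  have hfac : ∀ i, 0 < Q i ^ (t i) := by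
    intro i
    rcases Nat.eq_zero_or_pos (t i) with h | h
    · rw [h, pow_zero]; norm_num
    · apply pow_pos
      rw [hQ]
      have : (0:ℝ) < (t i : ℝ) := by exact_mod_cast h
      positivity
  have hc_pos : 0 < c := by
    rw [hc]; exact Finset.prod_pos fun i _ => hfac i
  set S := Finset.univ.filter fun x : Fin n → Fin d => typeCount x = t with hS
  have hcount : (S.card : ℝ) * c ≤ 1 := by
    have h1 : ∀ x ∈ S, ∏ j, Q (x j) = c := by
      intro x hx
      rw [prod_eq_pow_typeCount, (Finset.mem_filter.mp hx).2, hc]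
    have h2 : (S.card : ℝ) * c = ∑ x ∈ S, ∏ j, Q (x j) := by
      rw [Finset.sum_congr rfl h1, Finset.sum_const, nsmul_eq_mul]
    rw [h2]
    calc ∑ x ∈ S, ∏ j, Q (x j) ≤ ∑ x : Fin n → Fin d, ∏ j, Q (x j) :=
          Finset.sum_le_sum_of_subset_of_nonneg (Finset.subset_univ S)
            (fun x _ _ => Finset.prod_nonneg fun j _ => hQ0 (x j))
      _ = (∑ i, Q i) ^ n := (Fintype.sum_pow Q n).symm
      _ = 1 := by rw [hQ1, one_pow]
  have hinv : c⁻¹ = Real.exp ((n:ℝ) * ∑ i, Real.negMulLog (Q i)) := by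
    have hlogc : Real.log c = ∑ i, (t i : ℝ) * Real.log (Q i) := by
      rw [hc, Real.log_prod (fun i _ => ne_of_gt (hfac i))]
      exact Finset.sum_congr rfl fun i _ => by rw [Real.log_pow]
    have hH : (n:ℝ) * ∑ i, Real.negMulLog (Q i) = -Real.log c := by
      rw [hlogc, Finset.mul_sum, ← Finset.sum_neg_distrib]
      apply Finset.sum_congr rfl
      intro i _
      rw [Real.negMulLog, hQ]
      field_simp
    rw [hH, ← Real.log_inv, Real.exp_log (by positivity)]
  calc (S.card : ℝ) ≤ c⁻¹ := by
        rw [← mul_le_mul_iff_of_pos_right hc_pos, inv_mul_cancel₀ (ne_of_gt hc_pos)]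
        exact hcount
    _ = Real.exp ((n:ℝ) * ∑ i, Real.negMulLog (Q i)) := hinv

open Classical in
/-- **Cardinality of the typical set.** The number of strings whose empirical distribution
is `δ`-close to `P` in total variation is at most
`(n+1)^d exp(n (H(P) + η δ + δ log d))`. -/
theorem typical_set_card_bound {d n : ℕ} (hd : 1 ≤ d) (hn : 1 ≤ n)
    (P : Fin d → ℝ) (hP : ∀ i, 0 ≤ P i) (hP1 : ∑ i, P i = 1)
    (δ : ℝ) (hδ : 0 ≤ δ) :
    ((Finset.univ.filter
        (fun x : Fin n → Fin d => ∑ i, |(typeCount x i : ℝ) / n - P i| ≤ δ)).card : ℝ) ≤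
      ((n : ℝ) + 1) ^ d *
        Real.exp ((n : ℝ) * ((∑ i, Real.negMulLog (P i)) + eta δ + δ * Real.log d)) := by
  classical
  have hn0 : (0:ℝ) < n := by exact_mod_cast hn
  set B : ℝ := Real.exp ((n : ℝ) * ((∑ i, Real.negMulLog (P i)) + eta δ + δ * Real.log d))
    with hB
  set T := Finset.univ.filter
    (fun x : Fin n → Fin d => ∑ i, |(typeCount x i : ℝ) / n - P i| ≤ δ) with hT
  set I := (Finset.univ : Finset (Fin n → Fin d)).image (typeCount (d := d) (n := n)) with hI
  have hcard : T.card = ∑ t ∈ I, (T.filter fun x => typeCount x = t).card :=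
    Finset.card_eq_sum_card_fiberwise fun x _ => Finset.mem_image_of_mem _ (Finset.mem_univ x)
  have hIcard : I.card ≤ (n + 1) ^ d := by
    have hinj : Set.InjOn (fun (t : Fin d → ℕ) (i : Fin d) => (⟨min (t i) n, by omega⟩ : Fin (n+1)))
        ↑I := by
      intro t ht t' ht' h
      obtain ⟨x, -, hx⟩ := Finset.mem_image.mp ht
      obtain ⟨x', -, hx'⟩ := Finset.mem_image.mp ht'
      funext i
      have h1 : min (t i) n = t i := min_eq_left (hx ▸ typeCount_le x i)
      have h2 : min (t' i) n = t' i := min_eq_left (hx' ▸ typeCount_le x' i)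
      have := congrFun h i
      simp only [Fin.mk.injEq] at this
      rw [h1, h2] at this
      exact this
    calc I.card ≤ (Finset.univ : Finset (Fin d → Fin (n+1))).card :=
          Finset.card_le_card_of_injOn _ (fun t _ => Finset.mem_univ _) hinj
      _ = (n + 1) ^ d := by
          rw [Finset.card_univ, Fintype.card_fun]
          simp
  have hfiber : ∀ t ∈ I, ((T.filter fun x => typeCount x = t).card : ℝ) ≤ B := by
    intro t _
    rcases Finset.eq_empty_or_nonempty (T.filter fun x => typeCount x = t) with he | hne
    · rw [he]; simp [hB]; positivity
    · obtain ⟨x₀, hx₀⟩ := hne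
      have hx₀T : x₀ ∈ T := (Finset.mem_filter.mp hx₀).1
      have hx₀t : typeCount x₀ = t := (Finset.mem_filter.mp hx₀).2
      set Q : Fin d → ℝ := fun i => (typeCount x₀ i : ℝ) / n with hQ
      have hQ0 : ∀ i, 0 ≤ Q i := fun i => by positivity
      have hQ1 : ∑ i, Q i = 1 := by
        rw [hQ, ← Finset.sum_div,
          show ∑ i, ((typeCount x₀ i : ℝ)) = (n:ℝ) by
            exact_mod_cast congrArg Nat.cast (typeCount_sum x₀)]
        field_simp
      have htyp : ∑ i, |Q i - P i| ≤ δ := by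
        have := (Finset.mem_filter.mp hx₀T).2
        exact this
      have hent : ∑ i, Real.negMulLog (Q i)
          ≤ (∑ i, Real.negMulLog (P i)) + eta δ + δ * Real.log d :=
        fannes_upper hd P Q hP hP1 hQ0 hQ1 hδ htyp
      calc ((T.filter fun x => typeCount x = t).card : ℝ)
          ≤ ((Finset.univ.filter fun x : Fin n → Fin d => typeCount x = typeCount x₀).card : ℝ) := by
            apply Nat.cast_le.mpr
            apply Finset.card_le_card
            intro x hx
            rw [Finset.mem_filter] at hx ⊢
            exact ⟨Finset.mem_univ x, hx₀t ▸ hx.2⟩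
        _ ≤ Real.exp ((n:ℝ) * ∑ i, Real.negMulLog (Q i)) := typeclass_card_le hn x₀
        _ ≤ B := by
            rw [hB, Real.exp_le_exp]
            exact mul_le_mul_of_nonneg_left hent (le_of_lt hn0)
  calc (T.card : ℝ) = ∑ t ∈ I, ((T.filter fun x => typeCount x = t).card : ℝ) := by
        rw [hcard]; push_cast; rfl
    _ ≤ ∑ _t ∈ I, B := Finset.sum_le_sum hfiber
    _ = (I.card : ℝ) * B := by rw [Finset.sum_const, nsmul_eq_mul]
    _ ≤ ((n:ℝ) + 1) ^ d * B := by
        apply mul_le_mul_of_nonneg_right _ (by positivity)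
        calc (I.card : ℝ) ≤ (((n + 1) ^ d : ℕ) : ℝ) := by exact_mod_cast hIcard
          _ = ((n:ℝ) + 1) ^ d := by push_cast; rfl
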